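/- arXiv:math/0301359 — 4 statements merged into one kernel-verified Lean document; each statement's English description precedes it below -/
import Mathlib

section
/- For every integer k ≥ 1, the binomial identity C(2k+1, k−1) = Σ_{i=1}^{k} (−1)^{i−1} · C(2k+2, k−i) · (1 + 2k·i² − 2i) holds, where C(n, m) denotes the binomial coefficient n choose m. -/
private lemma tel_aux (T : ℕ → ℤ) : ∀ n : ℕ,
    ∑ i ∈ Finset.Icc 1 n, (T i - T (i + 1)) = T 1 - T (n + 1) := by
  intro n
  induction n with
  | zero => simp
  | succ n ih =>
    rw [Finset.sum_Icc_succ_top (by omega : 1 ≤ n + 1), ih]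
    ring

/-- The Euler-characteristic binomial identity underlying Corollary 2 of the paper:
`C(2k+1, k−1) = Σ_{i=1}^{k} (−1)^{i−1} · C(2k+2, k−i) · (1 + 2k·i² − 2i)`. -/
theorem binomial_identity (k : ℕ) (hk : 1 ≤ k) :
    ((2 * k + 1).choose (k - 1) : ℤ) =
      ∑ i ∈ Finset.Icc 1 k,
        (-1 : ℤ) ^ (i - 1) * ((2 * k + 2).choose (k - i) : ℤ) *
          ((1 : ℤ) + 2 * (k : ℤ) * (i : ℤ) ^ 2 - 2 * (i : ℤ)) := by
  -- N i = (k+2) - (2k²+6k+3)i + 2(k+1)²i² + (2k+2)i³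
  set N : ℕ → ℤ := fun i =>
    ((k : ℤ) + 2) - (2 * (k:ℤ)^2 + 6 * k + 3) * i + 2 * ((k:ℤ) + 1)^2 * (i:ℤ)^2
      + (2 * (k:ℤ) + 2) * (i:ℤ)^3 with hN
  set T : ℕ → ℤ := fun i =>
    if i ≤ k then (-1 : ℤ) ^ (i - 1) * ((2 * k + 2).choose (k - i) : ℤ) * N i else 0 with hT
  have hkz : (0:ℤ) < 2 * (k:ℤ) + 2 := by positivity
  apply mul_left_cancel₀ (ne_of_gt hkz)
  have key : ∀ i ∈ Finset.Icc 1 k,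
      (2 * (k:ℤ) + 2) * ((-1 : ℤ) ^ (i - 1) * ((2 * k + 2).choose (k - i) : ℤ) *
          ((1 : ℤ) + 2 * (k : ℤ) * (i : ℤ) ^ 2 - 2 * (i : ℤ)))
        = T i - T (i + 1) := by
    intro i hi
    simp only [Finset.mem_Icc] at hi
    obtain ⟨m, rfl⟩ : ∃ m, i = m + 1 := ⟨i - 1, by omega⟩
    rcases eq_or_lt_of_le hi.2 with hik | hik
    · -- i = k : T (k+1) = 0
      subst hik
      simp only [hT, hN, if_pos le_rfl, if_neg (by omega : ¬ m + 1 + 1 ≤ m + 1),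
        Nat.sub_self, Nat.choose_zero_right, Nat.add_sub_cancel]
      push_cast
      ring
    · -- i < k
      have hile : m + 1 ≤ k := hi.2
      have hc : (((2 * k + 2).choose (k - (m + 1)) : ℤ)) * ((k:ℤ) - (m + 1))
          = ((2 * k + 2).choose (k - (m + 1) - 1) : ℤ) * ((k:ℤ) + (m + 1) + 3) := by
        have h := Nat.choose_succ_right_eq (2 * k + 2) (k - (m + 1) - 1)
        have e1 : k - (m + 1) - 1 + 1 = k - (m + 1) := by omega
        have e2 : 2 * k + 2 - (k - (m + 1) - 1) = k + (m + 1) + 3 := by omega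
        rw [e1, e2] at h
        have := congrArg (Nat.cast : ℕ → ℤ) h
        push_cast at this
        push_cast [Nat.cast_sub hile] at this
        linarith [this]
      simp only [hT, hN, if_pos hile, if_pos (by omega : m + 1 + 1 ≤ k),
        Nat.add_sub_cancel]
      have e3 : k - (m + 1 + 1) = k - (m + 1) - 1 := by omega
      rw [e3]
      apply mul_left_cancel₀ (a := (k:ℤ) + (m + 1) + 3) (by positivity)
      push_cast [Nat.cast_sub hile] at hc ⊢
      linear_combination ((-1:ℤ))^m * ((k:ℤ) + 2
        - (2*(k:ℤ)^2 + 6*k + 3)*((m:ℤ)+2) + 2*((k:ℤ)+1)^2*((m:ℤ)+2)^2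
        + (2*(k:ℤ)+2)*((m:ℤ)+2)^3) * hc
  rw [Finset.mul_sum, Finset.sum_congr rfl key]
  have htel : ∑ i ∈ Finset.Icc 1 k, (T i - T (i + 1)) = T 1 - T (k + 1) :=
    tel_aux T k
  rw [htel]
  have hT1 : T 1 = ((2 * k + 2).choose (k - 1) : ℤ) * ((k:ℤ) + 3) := by
    simp only [hT, hN, if_pos hk]
    push_cast
    ring
  have hTk1 : T (k + 1) = 0 := by simp [hT]
  rw [hT1, hTk1, sub_zero]
  -- (2k+2) * C(2k+1, k-1) = C(2k+2, k-1) * (k+3)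
  have h := Nat.choose_mul_succ_eq (2 * k + 1) (k - 1)
  have e : 2 * k + 1 + 1 - (k - 1) = k + 3 := by omega
  rw [e] at h
  have := congrArg (Nat.cast : ℕ → ℤ) h
  push_cast at this
  linarith [this]
end

section
/- Let R be a commutative ring and E an R-module whose third exterior power ∧³_R E is zero. Then for all v₁, v₂, v₃, γ ∈ E, the element (v₂∧v₃)⊗(v₁∧γ) − (v₁∧v₃)⊗(v₂∧γ) + (v₁∧v₂)⊗(v₃∧γ) of (∧²_R E) ⊗_R (∧²_R E) is zero. -/
open TensorProduct

set_option synthInstance.maxHeartbeats 1000000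
set_option maxHeartbeats 1000000

/-- The wedge of a family `v : Fin n → M`, as an element of the `n`-th exterior power
`⋀[R]^n M` (a submodule of the exterior algebra). -/
noncomputable def wedgeOf (R : Type*) {M : Type*} [CommRing R] [AddCommGroup M] [Module R M]
    (n : ℕ) (v : Fin n → M) : ⋀[R]^n M :=
  ⟨ExteriorAlgebra.ιMulti R n v, ExteriorAlgebra.ιMulti_range R n ⟨v, rfl⟩⟩


section Aux
variable (R : Type*) [CommRing R] (E : Type*) [AddCommGroup E] [Module R E]

lemma ιMulti_two (x y : E) :
    ExteriorAlgebra.ιMulti R 2 ![x, y] = ExteriorAlgebra.ι R x * ExteriorAlgebra.ι R y := by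
  simp [ExteriorAlgebra.ιMulti_apply, List.ofFn_succ]

lemma wedgeOf_coe (x y : E) :
    (wedgeOf R 2 ![x, y] : ExteriorAlgebra R E)
      = ExteriorAlgebra.ι R x * ExteriorAlgebra.ι R y := ιMulti_two R E x y

noncomputable def wedge2 : E →ₗ[R] E →ₗ[R] ⋀[R]^2 E :=
  LinearMap.mk₂ R (fun x y => wedgeOf R 2 ![x, y])
    (fun x x' y => by
      apply Subtype.ext
      simp [wedgeOf_coe, add_mul, map_add])
    (fun c x y => by
      apply Subtype.ext
      simp [wedgeOf_coe, smul_mul_assoc, map_smul])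
    (fun x y y' => by
      apply Subtype.ext
      simp [wedgeOf_coe, mul_add, map_add])
    (fun c x y => by
      apply Subtype.ext
      simp [wedgeOf_coe, mul_smul_comm, map_smul])

variable {R E}

lemma wedge2_self (x : E) : wedge2 R E x x = 0 := by
  apply Subtype.ext
  simp [wedge2, wedgeOf_coe, ExteriorAlgebra.ι_sq_zero]

lemma wedge2_swap (x y : E) : wedge2 R E x y = - wedge2 R E y x := by
  have h : wedge2 R E (x + y) (x + y) = 0 := wedge2_self _
  rw [map_add] at h
  simp only [LinearMap.add_apply, map_add, wedge2_self] at h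
  -- h : 0 + wedge2 x y + (wedge2 y x + 0) = 0
  linear_combination (norm := abel) h

end Aux

section Tri
variable {R : Type*} [CommRing R] {E : Type*} [AddCommGroup E] [Module R E]

noncomputable def triMap (γ : E) :
    E [⋀^Fin 3]→ₗ[R] ((⋀[R]^2 E) ⊗[R] (⋀[R]^2 E)) where
  toFun v :=
    wedge2 R E (v 1) (v 2) ⊗ₜ[R] wedge2 R E (v 0) γ
      - wedge2 R E (v 0) (v 2) ⊗ₜ[R] wedge2 R E (v 1) γ
      + wedge2 R E (v 0) (v 1) ⊗ₜ[R] wedge2 R E (v 2) γ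
  map_update_add' v i x y := by
    fin_cases i <;>
      simp [Function.update_apply, Fin.ext_iff, map_add, LinearMap.add_apply,
        add_tmul, tmul_add] <;> abel
  map_update_smul' v i c x := by
    fin_cases i <;>
      simp [Function.update_apply, Fin.ext_iff, map_smul, LinearMap.smul_apply,
        smul_tmul', tmul_smul, smul_sub, smul_add]
  map_eq_zero_of_eq' v i j hv hij := by
    fin_cases i <;> fin_cases j <;> simp_all [Fin.ext_iff] <;>
    · first
      | (rw [hv]; rw [wedge2_swap (v _) (v _)]; simp [wedge2_self]; try abel)
      | (rw [← hv]; rw [wedge2_swap (v _) (v _)]; simp [wedge2_self]; try abel)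
      | (rw [hv]; simp [wedge2_self]; try abel)
      | (rw [← hv]; simp [wedge2_self]; try abel)
      all_goals (simp only [neg_one_smul, neg_tmul]; abel)

end Tri

/-- If the third exterior power of an `R`-module `E` vanishes, then for all
`v₁ v₂ v₃ γ ∈ E` the element
`(v₂∧v₃)⊗(v₁∧γ) − (v₁∧v₃)⊗(v₂∧γ) + (v₁∧v₂)⊗(v₃∧γ)` of `(∧²E) ⊗ (∧²E)` is zero. -/
theorem plucker_tensor_relation (R : Type*) [CommRing R] (E : Type*) [AddCommGroup E]
    [Module R E] (h : ∀ x : ⋀[R]^3 E, x = 0) (v₁ v₂ v₃ γ : E) :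
    wedgeOf R 2 ![v₂, v₃] ⊗ₜ[R] wedgeOf R 2 ![v₁, γ]
      - wedgeOf R 2 ![v₁, v₃] ⊗ₜ[R] wedgeOf R 2 ![v₂, γ]
      + wedgeOf R 2 ![v₁, v₂] ⊗ₜ[R] wedgeOf R 2 ![v₃, γ]
      = (0 : (⋀[R]^2 E) ⊗[R] (⋀[R]^2 E)) := by
  classical
  have hι : ExteriorAlgebra.ιMulti R 3 ![v₁, v₂, v₃] = 0 := by
    have := h (wedgeOf R 3 ![v₁, v₂, v₃])
    simpa [wedgeOf] using congrArg Subtype.val this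
  set F : ∀ i : ℕ, E [⋀^Fin i]→ₗ[R] ((⋀[R]^2 E) ⊗[R] (⋀[R]^2 E)) :=
    Function.update (fun _ => 0) 3 (triMap (R := R) γ) with hF
  have key : (triMap (R := R) γ) ![v₁, v₂, v₃] = 0 := by
    have h1 := ExteriorAlgebra.liftAlternating_apply_ιMulti (R := R) (M := E) (N := (⋀[R]^2 E) ⊗[R] (⋀[R]^2 E)) F ![v₁, v₂, v₃]
    rw [hι, map_zero] at h1
    have h2 : F 3 = triMap (R := R) γ := by rw [hF, Function.update_self]
    have h1' : (F 3) ![v₁, v₂, v₃] = 0 := h1.symm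
    rw [h2] at h1'
    exact h1'
  have : (triMap (R := R) γ) ![v₁, v₂, v₃]
      = wedgeOf R 2 ![v₂, v₃] ⊗ₜ[R] wedgeOf R 2 ![v₁, γ]
      - wedgeOf R 2 ![v₁, v₃] ⊗ₜ[R] wedgeOf R 2 ![v₂, γ]
      + wedgeOf R 2 ![v₁, v₂] ⊗ₜ[R] wedgeOf R 2 ![v₃, γ] := by
    simp [triMap, wedge2]
  rw [← this, key]
end

section
/- Let K be a field, V a K-vector space, A a commutative K-algebra, and d : ∧²V → A a K-linear map satisfying the Plücker-type relation: for all v₁, v₂, v₃, γ ∈ V, d(v₂∧v₃)·d(v₁∧γ) − d(v₁∧v₃)·d(v₂∧γ) + d(v₁∧v₂)·d(v₃∧γ) = 0 in A. Fix an integer k ≥ 2, elements w₁, …, w_{k+1} ∈ V, and τ ∈ V, and define φ(τ) = Σ_{1≤i<j≤k+1} (−1)^{i+j} d(τ∧w₁)∧…∧d(τ∧w_{k+1}) ⊗ d(w_i∧w_j) ∈ (∧^{k−1}A) ⊗ A, where in each summand the factors d(τ∧w_i) and d(τ∧w_j) are omitted from the wedge product (so it has k−1 factors). Let δ : (∧^{k−1}A)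 ⊗ A → (∧^{k−2}A) ⊗ A be the Koszul differential defined by δ(a₁∧…∧a_{k−1} ⊗ b) = Σ_{l=1}^{k−1} (−1)^{l−1} a₁∧…∧â_l∧…∧a_{k−1} ⊗ a_l·b (where â_l means a_l is omitted). Then δ(φ(τ)) = 0. -/
open TensorProduct

set_option synthInstance.maxHeartbeats 1000000
set_option maxHeartbeats 1000000

/-- For `i < j` in `Fin (n+3)`, the strictly increasing enumeration
`Fin (n+1) → Fin (n+3)` of the complement of `{i, j}`. -/
def omitTwo {n : ℕ} (i j : Fin (n + 3)) (l : Fin (n + 1)) : Fin (n + 3) :=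
  if (l : ℕ) < (i : ℕ) then ⟨(l : ℕ), by have := l.isLt; omega⟩
  else if (l : ℕ) + 1 < (j : ℕ) then ⟨(l : ℕ) + 1, by have := l.isLt; omega⟩
  else ⟨(l : ℕ) + 2, by have := l.isLt; omega⟩

lemma succAbove_coe {n : ℕ} (l : Fin (n+1)) (m : Fin n) :
    ((l.succAbove m : Fin (n+1)) : ℕ) = if (m:ℕ) < (l:ℕ) then (m:ℕ) else (m:ℕ)+1 := by
  simp only [Fin.succAbove, Fin.lt_def, Fin.coe_castSucc]
  split_ifs <;> simp

lemma omitTwo_coe {n : ℕ} (i j : Fin (n+3)) (l : Fin (n+1)) :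
    ((omitTwo i j l : Fin (n+3)) : ℕ)
      = if (l:ℕ) < (i:ℕ) then (l:ℕ) else if (l:ℕ)+1 < (j:ℕ) then (l:ℕ)+1 else (l:ℕ)+2 := by
  unfold omitTwo; split_ifs <;> rfl

/-- `a % (n+1)` as an element of `Fin (n+1)`. -/
def mk1 (n : ℕ) (a : ℕ) : Fin (n+1) := ⟨a % (n+1), Nat.mod_lt _ (Nat.succ_pos n)⟩

lemma mk1_coe (n : ℕ) (a : ℕ) (h : a ≤ n) : ((mk1 n a : Fin (n+1)) : ℕ) = a :=
  Nat.mod_eq_of_lt (by omega)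

/-- From a triple `x < y < z` and a choice `k ∈ {0,1,2}` of which element is to be
the "extra" one, produce the remaining pair together with the position of the extra
element in the complement of the pair. -/
def gmap {n : ℕ} (t : (Fin (n+3) × Fin (n+3) × Fin (n+3)) × Fin 3) :
    (Fin (n+3) × Fin (n+3)) × Fin (n+1) :=
  if t.2 = 0 then ((t.1.2.1, t.1.2.2), mk1 n (t.1.1 : ℕ))
  else if t.2 = 1 then ((t.1.1, t.1.2.2), mk1 n ((t.1.2.1 : ℕ) - 1))
  else ((t.1.1, t.1.2.1), mk1 n ((t.1.2.2 : ℕ) - 2))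

/-- Inverse of `gmap`. -/
def emap {n : ℕ} (q : (Fin (n+3) × Fin (n+3)) × Fin (n+1)) :
    (Fin (n+3) × Fin (n+3) × Fin (n+3)) × Fin 3 :=
  if omitTwo q.1.1 q.1.2 q.2 < q.1.1 then ((omitTwo q.1.1 q.1.2 q.2, q.1.1, q.1.2), 0)
  else if omitTwo q.1.1 q.1.2 q.2 < q.1.2 then ((q.1.1, omitTwo q.1.1 q.1.2 q.2, q.1.2), 1)
  else ((q.1.1, q.1.2, omitTwo q.1.1 q.1.2 q.2), 2)

section CombinatorialLemmas
variable {n : ℕ}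

lemma hi_lem (q : (Fin (n+3) × Fin (n+3)) × Fin (n+1)) (hq : (q.1.1:ℕ) < (q.1.2:ℕ)) :
    (emap q).1.1 < (emap q).1.2.1 ∧ (emap q).1.2.1 < (emap q).1.2.2 := by
  have h := omitTwo_coe q.1.1 q.1.2 q.2
  unfold emap
  split_ifs at h ⊢ <;> simp_all <;> omega

lemma left_inv_lem (q : (Fin (n+3) × Fin (n+3)) × Fin (n+1)) (hq : (q.1.1:ℕ) < (q.1.2:ℕ)) :
    gmap (emap q) = q := by
  obtain ⟨⟨i, j⟩, l⟩ := q
  have h := omitTwo_coe i j l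
  have hl := l.isLt
  simp only at hq
  unfold emap
  split_ifs with h1 h2 <;>
  · simp only [gmap, Fin.lt_def, Fin.isValue, Fin.reduceEq, if_true, if_false,
      reduceIte] at *
    refine Prod.ext rfl (Fin.ext ?_)
    show _ % (n+1) = (l:ℕ)
    rw [Nat.mod_eq_of_lt (by split_ifs at h <;> omega)]
    split_ifs at h <;> omega

variable (x y z : Fin (n+3))

lemma gmap0 : gmap ((x,y,z),(0:Fin 3)) = ((y,z), mk1 n (x:ℕ)) := by
  unfold gmap; rw [if_pos rfl]
lemma gmap1 : gmap ((x,y,z),(1:Fin 3)) = ((x,z), mk1 n ((y:ℕ)-1)) := by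
  unfold gmap; rw [if_neg (by decide : ¬(1:Fin 3) = 0), if_pos rfl]
lemma gmap2 : gmap ((x,y,z),(2:Fin 3)) = ((x,y), mk1 n ((z:ℕ)-2)) := by
  unfold gmap; rw [if_neg (by decide : ¬(2:Fin 3) = 0), if_neg (by decide : ¬(2:Fin 3) = 1)]

variable (h1 : (x:ℕ) < (y:ℕ)) (h2 : (y:ℕ) < (z:ℕ))
include h1 h2

lemma omit0 : omitTwo y z (mk1 n (x:ℕ)) = x := by
  have hz := z.isLt
  have hm : ((x:ℕ)) % (n+1) = (x:ℕ) := Nat.mod_eq_of_lt (by omega)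
  apply Fin.ext; rw [omitTwo_coe]; simp only [mk1, hm]; split_ifs <;> omega

lemma omit1 : omitTwo x z (mk1 n ((y:ℕ)-1)) = y := by
  have hz := z.isLt
  have hm : ((y:ℕ)-1) % (n+1) = (y:ℕ)-1 := Nat.mod_eq_of_lt (by omega)
  apply Fin.ext; rw [omitTwo_coe]; simp only [mk1, hm]; split_ifs <;> omega

lemma omit2 : omitTwo x y (mk1 n ((z:ℕ)-2)) = z := by
  have hz := z.isLt
  have hm : ((z:ℕ)-2) % (n+1) = (z:ℕ)-2 := Nat.mod_eq_of_lt (by omega)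
  apply Fin.ext; rw [omitTwo_coe]; simp only [mk1, hm]; split_ifs <;> omega

lemma right_inv_lem (k : Fin 3) : emap (gmap ((x,y,z),k)) = ((x,y,z),k) := by
  fin_cases k
  · show emap (gmap ((x,y,z),(0:Fin 3))) = ((x,y,z),(0:Fin 3))
    rw [gmap0]; unfold emap; simp only
    rw [omit0 x y z h1 h2, if_pos (show x < y from h1)]
  · show emap (gmap ((x,y,z),(1:Fin 3))) = ((x,y,z),(1:Fin 3))
    rw [gmap1]; unfold emap; simp only
    rw [omit1 x y z h1 h2, if_neg (show ¬ y < x from by rw [Fin.lt_def]; omega),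
      if_pos (show y < z from h2)]
  · show emap (gmap ((x,y,z),(2:Fin 3))) = ((x,y,z),(2:Fin 3))
    rw [gmap2]; unfold emap; simp only
    rw [omit2 x y z h1 h2, if_neg (show ¬ z < x from by rw [Fin.lt_def]; omega),
      if_neg (show ¬ z < y from by rw [Fin.lt_def]; omega)]

lemma gmap_lt (k : Fin 3) : (gmap ((x,y,z),k)).1.1 < (gmap ((x,y,z),k)).1.2 := by
  fin_cases k
  · show (gmap ((x,y,z),(0:Fin 3))).1.1 < (gmap ((x,y,z),(0:Fin 3))).1.2
    rw [gmap0]; exact h2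
  · show (gmap ((x,y,z),(1:Fin 3))).1.1 < (gmap ((x,y,z),(1:Fin 3))).1.2
    rw [gmap1]; show (x:ℕ) < (z:ℕ); omega
  · show (gmap ((x,y,z),(2:Fin 3))).1.1 < (gmap ((x,y,z),(2:Fin 3))).1.2
    rw [gmap2]; exact h1

lemma succ_comp0 (m : Fin n) :
    omitTwo x z ((mk1 n ((y:ℕ)-1)).succAbove m) = omitTwo y z ((mk1 n (x:ℕ)).succAbove m) := by
  have hz := z.isLt
  have hm := m.isLt
  have hmx : ((x:ℕ)) % (n+1) = (x:ℕ) := Nat.mod_eq_of_lt (by omega)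
  have hmy : ((y:ℕ)-1) % (n+1) = (y:ℕ)-1 := Nat.mod_eq_of_lt (by omega)
  apply Fin.ext
  rw [omitTwo_coe, omitTwo_coe, succAbove_coe, succAbove_coe]
  simp only [mk1, hmx, hmy]
  split_ifs <;> omega

lemma succ_comp2 (m : Fin n) :
    omitTwo x y ((mk1 n ((z:ℕ)-2)).succAbove m) = omitTwo y z ((mk1 n (x:ℕ)).succAbove m) := by
  have hz := z.isLt
  have hm := m.isLt
  have hmx : ((x:ℕ)) % (n+1) = (x:ℕ) := Nat.mod_eq_of_lt (by omega)
  have hmz : ((z:ℕ)-2) % (n+1) = (z:ℕ)-2 := Nat.mod_eq_of_lt (by omega)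
  apply Fin.ext
  rw [omitTwo_coe, omitTwo_coe, succAbove_coe, succAbove_coe]
  simp only [mk1, hmx, hmz]
  split_ifs <;> omega

end CombinatorialLemmas

/-- Let `K` be a field, `V` a `K`-vector space, `A` a commutative `K`-algebra and
`d : ∧²V → A` a `K`-linear map satisfying the Plücker-type relation.  Fix an integer
`k = n + 2 ≥ 2` (so `n` ranges over all naturals), elements `w₁, …, w_{k+1}` of `V`
(indexed by `Fin (n+3)`) and `τ ∈ V`, and let
`φ(τ) = Σ_{i<j} (−1)^{i+j} d(τ∧w₁)∧…ι̂…ĵ…∧d(τ∧w_{k+1}) ⊗ d(w_i∧w_j) ∈ (∧^{k−1}A) ⊗ A`.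
Let `δ : (∧^{k−1}A) ⊗ A → (∧^{k−2}A) ⊗ A` be the Koszul differential, characterized on
decomposable elements by
`δ(a₁∧…∧a_{k−1} ⊗ b) = Σ_l (−1)^{l−1} a₁∧…∧â_l∧…∧a_{k−1} ⊗ a_l·b`.
Then `δ(φ(τ)) = 0`. -/
theorem koszul_closed_phi (K : Type*) [Field K] (V : Type*) [AddCommGroup V] [Module K V]
    (A : Type*) [CommRing A] [Algebra K A]
    (d : (⋀[K]^2 V) →ₗ[K] A)
    (hd : ∀ v₁ v₂ v₃ γ : V,
      d (wedgeOf K 2 ![v₂, v₃]) * d (wedgeOf K 2 ![v₁, γ])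
        - d (wedgeOf K 2 ![v₁, v₃]) * d (wedgeOf K 2 ![v₂, γ])
        + d (wedgeOf K 2 ![v₁, v₂]) * d (wedgeOf K 2 ![v₃, γ]) = 0)
    (n : ℕ) (w : Fin (n + 3) → V) (τ : V)
    (δ : ((⋀[K]^(n + 1) A) ⊗[K] A) →ₗ[K] ((⋀[K]^n A) ⊗[K] A))
    (hδ : ∀ (a : Fin (n + 1) → A) (b : A),
      δ (wedgeOf K (n + 1) a ⊗ₜ[K] b)
        = ∑ l : Fin (n + 1), ((-1 : K) ^ (l : ℕ)) •
            (wedgeOf K n (a ∘ l.succAbove) ⊗ₜ[K] (a l * b))) :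
    δ (∑ p ∈ Finset.univ.filter (fun p : Fin (n + 3) × Fin (n + 3) => p.1 < p.2),
        ((-1 : K) ^ ((p.1 : ℕ) + (p.2 : ℕ))) •
          (wedgeOf K (n + 1) (fun l => d (wedgeOf K 2 ![τ, w (omitTwo p.1 p.2 l)]))
            ⊗ₜ[K] d (wedgeOf K 2 ![w p.1, w p.2]))) = 0 := by
  classical
  -- antisymmetry of `d` on decomposables
  have anti : ∀ a b : V, d (wedgeOf K 2 ![a, b]) = - d (wedgeOf K 2 ![b, a]) := by
    intro a b
    have h0 : wedgeOf K 2 ![a, b] + wedgeOf K 2 ![b, a] = 0 := by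
      apply Subtype.ext
      show ExteriorAlgebra.ιMulti K 2 ![a,b] + ExteriorAlgebra.ιMulti K 2 ![b,a] = 0
      simp [ExteriorAlgebra.ιMulti_apply, ExteriorAlgebra.ι_add_mul_swap]
    have h1 := congrArg d h0
    rw [map_add, map_zero] at h1
    exact eq_neg_of_add_eq_zero_left h1
  -- the Plücker relation in the form we use it
  have pluck : ∀ a b c : V,
      d (wedgeOf K 2 ![τ, a]) * d (wedgeOf K 2 ![b, c])
        - d (wedgeOf K 2 ![τ, b]) * d (wedgeOf K 2 ![a, c])
        + d (wedgeOf K 2 ![τ, c]) * d (wedgeOf K 2 ![a, b]) = 0 := by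
    intro a b c
    have h := hd a b c τ
    rw [anti a τ, anti b τ, anti c τ] at h
    linear_combination -h
  rw [map_sum]
  simp only [map_smul, hδ, Finset.smul_sum, smul_smul, ← pow_add]
  rw [← Finset.sum_product']
  trans (∑ t ∈ (Finset.univ.filter
      (fun t : Fin (n+3) × Fin (n+3) × Fin (n+3) => t.1 < t.2.1 ∧ t.2.1 < t.2.2)) ×ˢ
        (Finset.univ : Finset (Fin 3)),
      ((-1:K) ^ (((gmap t).1.1 : ℕ) + ((gmap t).1.2 : ℕ) + ((gmap t).2 : ℕ))) •
        (wedgeOf K n ((fun l => d (wedgeOf K 2 ![τ, w (omitTwo (gmap t).1.1 (gmap t).1.2 l)]))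
            ∘ (gmap t).2.succAbove)
          ⊗ₜ[K] (d (wedgeOf K 2 ![τ, w (omitTwo (gmap t).1.1 (gmap t).1.2 (gmap t).2)])
            * d (wedgeOf K 2 ![w (gmap t).1.1, w (gmap t).1.2]))))
  · refine Finset.sum_nbij' emap gmap ?_ ?_ ?_ ?_ ?_
    · intro q hq
      simp only [Finset.mem_product, Finset.mem_filter, Finset.mem_univ, true_and,
        and_true] at hq ⊢
      exact hi_lem q hq
    · intro t ht
      simp only [Finset.mem_product, Finset.mem_filter, Finset.mem_univ, true_and,
        and_true] at ht ⊢
      exact gmap_lt t.1.1 t.1.2.1 t.1.2.2 ht.1 ht.2 t.2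
    · intro q hq
      simp only [Finset.mem_product, Finset.mem_filter, Finset.mem_univ, true_and,
        and_true] at hq
      exact left_inv_lem q hq
    · intro t ht
      simp only [Finset.mem_product, Finset.mem_filter, Finset.mem_univ, true_and,
        and_true] at ht
      exact right_inv_lem t.1.1 t.1.2.1 t.1.2.2 ht.1 ht.2 t.2
    · intro q hq
      simp only [Finset.mem_product, Finset.mem_filter, Finset.mem_univ, true_and,
        and_true] at hq
      rw [left_inv_lem q hq]
  · rw [Finset.sum_product]
    refine Finset.sum_eq_zero ?_
    rintro ⟨x, y, z⟩ ht
    simp only [Finset.mem_filter, Finset.mem_univ, true_and] at ht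
    obtain ⟨h1, h2⟩ := ht
    have h1' : (x:ℕ) < (y:ℕ) := h1
    have h2' : (y:ℕ) < (z:ℕ) := h2
    have hz := z.isLt
    rw [Fin.sum_univ_three]
    rw [gmap0, gmap1, gmap2]
    simp only
    rw [omit0 x y z h1' h2', omit1 x y z h1' h2', omit2 x y z h1' h2']
    have e1 : ((fun l => d (wedgeOf K 2 ![τ, w (omitTwo x z l)])) ∘
        (mk1 n ((y:ℕ)-1)).succAbove)
        = ((fun l => d (wedgeOf K 2 ![τ, w (omitTwo y z l)])) ∘ (mk1 n (x:ℕ)).succAbove) :=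
      funext fun m => congrArg d (congrArg (fun v => wedgeOf K 2 ![τ, w v])
        (succ_comp0 x y z h1' h2' m))
    have e2 : ((fun l => d (wedgeOf K 2 ![τ, w (omitTwo x y l)])) ∘
        (mk1 n ((z:ℕ)-2)).succAbove)
        = ((fun l => d (wedgeOf K 2 ![τ, w (omitTwo y z l)])) ∘ (mk1 n (x:ℕ)).succAbove) :=
      funext fun m => congrArg d (congrArg (fun v => wedgeOf K 2 ![τ, w v])
        (succ_comp2 x y z h1' h2' m))
    rw [e1, e2]
    rw [mk1_coe n (x:ℕ) (by omega), mk1_coe n ((y:ℕ)-1) (by omega),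
      mk1_coe n ((z:ℕ)-2) (by omega)]
    have s0 : ((y:ℕ) + (z:ℕ) + (x:ℕ)) = ((x:ℕ) + (y:ℕ) + (z:ℕ)) := by omega
    have s1 : (-1:K) ^ ((x:ℕ) + (z:ℕ) + ((y:ℕ)-1)) = -(-1:K) ^ ((x:ℕ) + (y:ℕ) + (z:ℕ)) := by
      rw [show (x:ℕ) + (y:ℕ) + (z:ℕ) = ((x:ℕ) + (z:ℕ) + ((y:ℕ)-1)) + 1 by omega, pow_succ]
      ring
    have s2 : (-1:K) ^ ((x:ℕ) + (y:ℕ) + ((z:ℕ)-2)) = (-1:K) ^ ((x:ℕ) + (y:ℕ) + (z:ℕ)) := by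
      rw [show (x:ℕ) + (y:ℕ) + (z:ℕ) = ((x:ℕ) + (y:ℕ) + ((z:ℕ)-2)) + 2 by omega, pow_add]
      ring
    rw [s0, s1, s2]
    set W := wedgeOf K n ((fun l => d (wedgeOf K 2 ![τ, w (omitTwo y z l)]))
      ∘ (mk1 n (x:ℕ)).succAbove) with hW
    set c := (-1:K) ^ ((x:ℕ) + (y:ℕ) + (z:ℕ)) with hc
    have : c • (W ⊗ₜ[K] (d (wedgeOf K 2 ![τ, w x]) * d (wedgeOf K 2 ![w y, w z])))
        + (-c) • (W ⊗ₜ[K] (d (wedgeOf K 2 ![τ, w y]) * d (wedgeOf K 2 ![w x, w z])))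
        + c • (W ⊗ₜ[K] (d (wedgeOf K 2 ![τ, w z]) * d (wedgeOf K 2 ![w x, w y])))
        = c • (W ⊗ₜ[K] ((d (wedgeOf K 2 ![τ, w x]) * d (wedgeOf K 2 ![w y, w z]))
            - (d (wedgeOf K 2 ![τ, w y]) * d (wedgeOf K 2 ![w x, w z]))
            + (d (wedgeOf K 2 ![τ, w z]) * d (wedgeOf K 2 ![w x, w y])))) := by
      rw [TensorProduct.tmul_add, TensorProduct.tmul_sub]
      rw [smul_add, smul_sub]
      module
    rw [this, pluck (w x) (w y) (w z), TensorProduct.tmul_zero, smul_zero]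
end

section
/- Let K be a field, V a K-vector space, A a commutative K-algebra, and d : ∧²V → A a K-linear map satisfying the Plücker-type relation: for all v₁, v₂, v₃, γ ∈ V, d(v₂∧v₃)·d(v₁∧γ) − d(v₁∧v₃)·d(v₂∧γ) + d(v₁∧v₂)·d(v₃∧γ) = 0 in A. Fix an integer k ≥ 2, a K-subspace W ⊆ V and a K-subspace B ⊆ A such that d(v∧w) ∈ B for all v ∈ V and w ∈ W. Fix w₁, …, w_{k+1} ∈ W and τ ∈ V, and define φ(τ) = Σ_{1≤i<j≤k+1} (−1)^{i+j} d(τ∧w₁)∧…∧d(τ∧w_{k+1}) ⊗ d(w_i∧w_j) ∈ (∧^{k−1}A) ⊗ A, where in each summand the factors d(τ∧w_i) and d(τ∧w_j) are omitted from the wedge product. Let δ : (∧^{k}A) ⊗ A → (∧^{k−1}A) ⊗ A be the Koszul differential δ(a₁∧…∧a_k ⊗ b) = Σ_{l=1}^{k} (−1)^{l−1} a₁∧…∧â_l∧…∧a_k ⊗ a_l·b. Then for every w ∈ V, the element φ(τ)·d(τ∧w) of (∧^{k−1}A) ⊗ A, obtained by multiplying the second tensor factor of φ(τ) by d(τ∧w)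 ∈ A, lies in δ(image of (∧^{k}B) ⊗ B in (∧^{k}A) ⊗ A). -/
open TensorProduct

set_option synthInstance.maxHeartbeats 1000000
set_option maxHeartbeats 1000000

/-- The map `∧ⁿM → ∧ⁿN` functorially induced by a linear map `f : M → N`. -/
noncomputable def extPowerMap {R : Type*} [CommRing R] {M N : Type*} [AddCommGroup M]
    [Module R M] [AddCommGroup N] [Module R N] (n : ℕ) (f : M →ₗ[R] N) :
    (⋀[R]^n M) →ₗ[R] ⋀[R]^n N :=
  ((ExteriorAlgebra.map f).toLinearMap.comp (⋀[R]^n M).subtype).codRestrict (⋀[R]^n N)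
    (fun x => by
      have h : Submodule.map (ExteriorAlgebra.map f).toLinearMap (⋀[R]^n M) ≤ ⋀[R]^n N := by
        rw [Submodule.map_pow]
        refine pow_le_pow_left' ?_ n
        rw [ExteriorAlgebra.ι_range_map_map]
        exact LinearMap.map_le_range
      exact h ⟨x, x.2, rfl⟩)

lemma wedgeOf_two_swap (R : Type*) {M : Type*} [CommRing R] [AddCommGroup M] [Module R M]
    (x y : M) : wedgeOf R 2 ![x, y] = - wedgeOf R 2 ![y, x] := by
  apply Subtype.ext
  show ExteriorAlgebra.ιMulti R 2 ![x, y] = -(ExteriorAlgebra.ιMulti R 2 ![y, x])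
  simp only [ExteriorAlgebra.ιMulti_apply, List.ofFn_succ, List.ofFn_zero, List.prod_cons,
    List.prod_nil, Matrix.cons_val_zero, Matrix.cons_val_one, Matrix.head_cons, mul_one,
    Fin.succ_zero_eq_one]
  exact eq_neg_of_add_eq_zero_left (ExteriorAlgebra.ι_add_mul_swap x y)

lemma extPowerMap_wedgeOf {R : Type*} [CommRing R] {M N : Type*} [AddCommGroup M]
    [Module R M] [AddCommGroup N] [Module R N] (n : ℕ) (f : M →ₗ[R] N) (v : Fin n → M) :
    extPowerMap n f (wedgeOf R n v) = wedgeOf R n (f ∘ v) := by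
  apply Subtype.ext
  show ExteriorAlgebra.map f (ExteriorAlgebra.ιMulti R n v) = ExteriorAlgebra.ιMulti R n (f ∘ v)
  simp

lemma val_succAbove' {n : ℕ} (p : Fin (n + 1)) (i : Fin n) :
    ((p.succAbove i : Fin (n + 1)) : ℕ) = if (i : ℕ) < (p : ℕ) then (i : ℕ) else (i : ℕ) + 1 := by
  rw [Fin.succAbove]
  split_ifs with h h' h' <;> simp_all [Fin.lt_def]

lemma omitTwo_succAbove {n : ℕ} (i : Fin (n + 3)) (l : Fin (n + 2)) (m : Fin (n + 1)) :
    i.succAbove (l.succAbove m) =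
      if ((i.succAbove l : Fin (n + 3)) : ℕ) < (i : ℕ) then omitTwo (i.succAbove l) i m
      else omitTwo i (i.succAbove l) m := by
  apply Fin.ext
  have hm := m.isLt
  rw [apply_ite Fin.val]
  simp only [omitTwo, val_succAbove', apply_ite Fin.val]
  split_ifs <;> omega

/-- The inverse of `i.succAbove` on the complement of `i`. -/
def dropAt {n : ℕ} (i j : Fin (n + 3)) : Fin (n + 2) :=
  ⟨if (j : ℕ) < (i : ℕ) then (j : ℕ) else (j : ℕ) - 1, by
    have := j.isLt; have := i.isLt; split_ifs <;> omega⟩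

lemma dropAt_succAbove {n : ℕ} (i : Fin (n + 3)) (l : Fin (n + 2)) :
    dropAt i (i.succAbove l) = l := by
  apply Fin.ext
  simp only [dropAt, val_succAbove']
  split_ifs <;> omega

lemma succAbove_dropAt {n : ℕ} (i j : Fin (n + 3)) (h : i ≠ j) :
    i.succAbove (dropAt i j) = j := by
  have hv : (i : ℕ) ≠ (j : ℕ) := fun hc => h (Fin.ext hc)
  have hj := j.isLt
  apply Fin.ext
  simp only [dropAt, val_succAbove']
  split_ifs <;> omega

/-- The summand indexed by an ordered pair `(i,j)`, `i ≠ j`, in the Koszul differential of the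
witness element. -/
noncomputable def Gaux {K A : Type*} [Field K] [CommRing A] [Algebra K A] (n : ℕ)
    (a X : Fin (n + 3) → A) (i j : Fin (n + 3)) : (⋀[K]^(n + 1) A) ⊗[K] A :=
  if (j : ℕ) < (i : ℕ) then
    ((-1 : K) ^ ((i : ℕ) + (j : ℕ) + 1)) •
      (wedgeOf K (n + 1) (fun m => a (omitTwo j i m)) ⊗ₜ[K] (a j * X i))
  else
    ((-1 : K) ^ ((i : ℕ) + (j : ℕ))) •
      (wedgeOf K (n + 1) (fun m => a (omitTwo i j m)) ⊗ₜ[K] (a j * X i))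

lemma term_eq_Gaux {K A : Type*} [Field K] [CommRing A] [Algebra K A] (n : ℕ)
    (a X : Fin (n + 3) → A) (i : Fin (n + 3)) (l : Fin (n + 2)) :
    (((-1 : K) ^ ((i : ℕ) + 1)) * ((-1 : K) ^ ((l : ℕ)))) •
      (wedgeOf K (n + 1) (fun m => a (i.succAbove (l.succAbove m)))
        ⊗ₜ[K] (a (i.succAbove l) * X i))
      = Gaux n a X i (i.succAbove l) := by
  have hv := val_succAbove' i l
  by_cases h : ((i.succAbove l : Fin (n + 3)) : ℕ) < (i : ℕ)
  · have hl : (l : ℕ) = ((i.succAbove l : Fin (n + 3)) : ℕ) := by split_ifs at hv <;> omega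
    rw [Gaux, if_pos h]
    have hfam : (fun m => a (i.succAbove (l.succAbove m)))
        = fun m => a (omitTwo (i.succAbove l) i m) := by
      funext m; rw [omitTwo_succAbove, if_pos h]
    rw [hfam]
    congr 1
    rw [← pow_add]
    congr 1
    omega
  · have hl : (l : ℕ) + 1 = ((i.succAbove l : Fin (n + 3)) : ℕ) := by split_ifs at hv <;> omega
    rw [Gaux, if_neg h]
    have hfam : (fun m => a (i.succAbove (l.succAbove m)))
        = fun m => a (omitTwo i (i.succAbove l) m) := by
      funext m; rw [omitTwo_succAbove, if_neg h]
    rw [hfam]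
    congr 1
    rw [← pow_add]
    congr 1
    omega

lemma Gaux_pair {K A : Type*} [Field K] [CommRing A] [Algebra K A] (n : ℕ)
    (a X : Fin (n + 3) → A) (i j : Fin (n + 3)) (hij : i < j) (P : A)
    (key : a j * X i - a i * X j = P) :
    Gaux n a X i j + Gaux n a X j i
      = ((-1 : K) ^ ((i : ℕ) + (j : ℕ))) •
          (wedgeOf K (n + 1) (fun m => a (omitTwo i j m)) ⊗ₜ[K] P) := by
  have hij' : (i : ℕ) < (j : ℕ) := hij
  rw [Gaux, Gaux, if_neg (by omega), if_pos (by omega)]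
  have hs : ((-1 : K) ^ ((j : ℕ) + (i : ℕ) + 1)) = -((-1 : K) ^ ((i : ℕ) + (j : ℕ))) := by
    rw [show (j : ℕ) + (i : ℕ) + 1 = ((i : ℕ) + (j : ℕ)) + 1 by omega, pow_succ]
    ring
  rw [hs, ← key, TensorProduct.tmul_sub]
  module

/-- Let `K` be a field, `V` a `K`-vector space, `A` a commutative `K`-algebra and
`d : ∧²V → A` a `K`-linear map satisfying the Plücker-type relation.  Fix an integer
`k = n + 2 ≥ 2` (so `n` ranges over all naturals), a subspace `W ⊆ V` and a subspace
`B ⊆ A` such that `d(v∧w) ∈ B` for all `v ∈ V`, `w ∈ W`.  Fix `w₁, …, w_{k+1} ∈ W`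
(indexed by `Fin (n+3)`) and `τ ∈ V`, and let
`φ(τ) = Σ_{i<j} (−1)^{i+j} d(τ∧w₁)∧…ι̂…ĵ…∧d(τ∧w_{k+1}) ⊗ d(w_i∧w_j) ∈ (∧^{k−1}A) ⊗ A`.
Let `δ : (∧^k A) ⊗ A → (∧^{k−1}A) ⊗ A` be the Koszul differential, characterized on
decomposable elements by `δ(a₁∧…∧a_k ⊗ b) = Σ_l (−1)^{l−1} a₁∧…∧â_l∧…∧a_k ⊗ a_l·b`.
Then for every `w ∈ V`, the element `φ(τ)·d(τ∧w)`, obtained by multiplying the second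
tensor factor of `φ(τ)` by `d(τ∧w)`, lies in the image under `δ` of the image of
`(∧^k B) ⊗ B` in `(∧^k A) ⊗ A`. -/
theorem phi_times_sigma_is_koszul_exact (K : Type*) [Field K] (V : Type*) [AddCommGroup V]
    [Module K V] (A : Type*) [CommRing A] [Algebra K A]
    (d : (⋀[K]^2 V) →ₗ[K] A)
    (hd : ∀ v₁ v₂ v₃ γ : V,
      d (wedgeOf K 2 ![v₂, v₃]) * d (wedgeOf K 2 ![v₁, γ])
        - d (wedgeOf K 2 ![v₁, v₃]) * d (wedgeOf K 2 ![v₂, γ])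
        + d (wedgeOf K 2 ![v₁, v₂]) * d (wedgeOf K 2 ![v₃, γ]) = 0)
    (n : ℕ) (W : Submodule K V) (B : Submodule K A)
    (hdB : ∀ v : V, ∀ w' ∈ W, d (wedgeOf K 2 ![v, w']) ∈ B)
    (w : Fin (n + 3) → V) (hw : ∀ i, w i ∈ W) (τ : V)
    (δ : ((⋀[K]^(n + 2) A) ⊗[K] A) →ₗ[K] ((⋀[K]^(n + 1) A) ⊗[K] A))
    (hδ : ∀ (a : Fin (n + 2) → A) (b : A),
      δ (wedgeOf K (n + 2) a ⊗ₜ[K] b)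
        = ∑ l : Fin (n + 2), ((-1 : K) ^ (l : ℕ)) •
            (wedgeOf K (n + 1) (a ∘ l.succAbove) ⊗ₜ[K] (a l * b)))
    (w₀ : V) :
    (TensorProduct.map LinearMap.id (LinearMap.mulRight K (d (wedgeOf K 2 ![τ, w₀]))))
        (∑ p ∈ Finset.univ.filter (fun p : Fin (n + 3) × Fin (n + 3) => p.1 < p.2),
          ((-1 : K) ^ ((p.1 : ℕ) + (p.2 : ℕ))) •
            (wedgeOf K (n + 1) (fun l => d (wedgeOf K 2 ![τ, w (omitTwo p.1 p.2 l)]))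
              ⊗ₜ[K] d (wedgeOf K 2 ![w p.1, w p.2])))
      ∈ Submodule.map δ
          (LinearMap.range (TensorProduct.map (extPowerMap (n + 2) B.subtype) B.subtype)) := by
  classical
  have dswap : ∀ x y : V, d (wedgeOf K 2 ![x, y]) = - d (wedgeOf K 2 ![y, x]) := fun x y => by
    rw [wedgeOf_two_swap, map_neg]
  set σ := d (wedgeOf K 2 ![τ, w₀]) with hσ
  set a : Fin (n + 3) → A := fun m => d (wedgeOf K 2 ![τ, w m]) with ha
  set X : Fin (n + 3) → A := fun i => d (wedgeOf K 2 ![w i, w₀]) with hX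
  have haB : ∀ m, a m ∈ B := fun m => hdB τ (w m) (hw m)
  have hXB : ∀ i, X i ∈ B := fun i => by
    simp only [hX]
    rw [dswap]
    exact B.neg_mem (hdB w₀ (w i) (hw i))
  set bv : Fin (n + 3) → B := fun m => ⟨a m, haB m⟩ with hbv
  set c : Fin (n + 3) → B := fun i => ⟨X i, hXB i⟩ with hc
  set β : (⋀[K]^(n + 2) ↥B) ⊗[K] ↥B :=
    ∑ i : Fin (n + 3), ((-1 : K) ^ ((i : ℕ) + 1)) •
      (wedgeOf K (n + 2) (fun l => bv (i.succAbove l)) ⊗ₜ[K] c i) with hβ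
  refine Submodule.mem_map.mpr
    ⟨TensorProduct.map (extPowerMap (n + 2) B.subtype) B.subtype β,
      LinearMap.mem_range.mpr ⟨β, rfl⟩, ?_⟩
  have key : ∀ i j : Fin (n + 3),
      a j * X i - a i * X j = d (wedgeOf K 2 ![w i, w j]) * σ := fun i j => by
    simp only [ha, hX, hσ]
    linear_combination (-1 : A) * hd (w i) (w j) τ w₀
      + d (wedgeOf K 2 ![w i, w₀]) * dswap (w j) τ
      - d (wedgeOf K 2 ![w j, w₀]) * dswap (w i) τ
  have hmapβ : TensorProduct.map (extPowerMap (n + 2) B.subtype) B.subtype β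
      = ∑ i : Fin (n + 3), ((-1 : K) ^ ((i : ℕ) + 1)) •
          (wedgeOf K (n + 2) (fun l => a (i.succAbove l)) ⊗ₜ[K] X i) := by
    rw [hβ, map_sum]
    refine Finset.sum_congr rfl fun i _ => ?_
    rw [LinearMap.map_smul, TensorProduct.map_tmul, extPowerMap_wedgeOf]
    rfl
  have hδmapβ : δ (TensorProduct.map (extPowerMap (n + 2) B.subtype) B.subtype β)
      = ∑ p ∈ Finset.univ.filter (fun p : Fin (n + 3) × Fin (n + 3) => p.1 < p.2),
          ((-1 : K) ^ ((p.1 : ℕ) + (p.2 : ℕ))) •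
            (wedgeOf K (n + 1) (fun l => a (omitTwo p.1 p.2 l))
              ⊗ₜ[K] (d (wedgeOf K 2 ![w p.1, w p.2]) * σ)) := by
    have hsplit : (Finset.univ.filter (fun p : Fin (n + 3) × Fin (n + 3) => p.1 ≠ p.2))
        = (Finset.univ.filter (fun p : Fin (n + 3) × Fin (n + 3) => p.1 < p.2))
          ∪ (Finset.univ.filter (fun p : Fin (n + 3) × Fin (n + 3) => p.2 < p.1)) := by
      rw [← Finset.filter_or]
      apply Finset.filter_congr
      intro p _
      exact ne_iff_lt_or_gt
    have hdisj : Disjoint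
        (Finset.univ.filter (fun p : Fin (n + 3) × Fin (n + 3) => p.1 < p.2))
        (Finset.univ.filter (fun p : Fin (n + 3) × Fin (n + 3) => p.2 < p.1)) := by
      rw [Finset.disjoint_left]
      intro p hp hq
      simp only [Finset.mem_filter] at hp hq
      exact absurd hq.2 (not_lt.mpr hp.2.le)
    calc δ (TensorProduct.map (extPowerMap (n + 2) B.subtype) B.subtype β)
        = ∑ i : Fin (n + 3), ∑ l : Fin (n + 2),
            (((-1 : K) ^ ((i : ℕ) + 1)) * ((-1 : K) ^ ((l : ℕ)))) •
              (wedgeOf K (n + 1) (fun m => a (i.succAbove (l.succAbove m)))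
                ⊗ₜ[K] (a (i.succAbove l) * X i)) := by
          rw [hmapβ, map_sum]
          refine Finset.sum_congr rfl fun i _ => ?_
          rw [LinearMap.map_smul, hδ, Finset.smul_sum]
          refine Finset.sum_congr rfl fun l _ => ?_
          rw [smul_smul]
          rfl
      _ = ∑ p ∈ (Finset.univ ×ˢ Finset.univ : Finset (Fin (n + 3) × Fin (n + 2))),
            (((-1 : K) ^ ((p.1 : ℕ) + 1)) * ((-1 : K) ^ ((p.2 : ℕ)))) •
              (wedgeOf K (n + 1) (fun m => a (p.1.succAbove (p.2.succAbove m)))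
                ⊗ₜ[K] (a (p.1.succAbove p.2) * X p.1)) := (Finset.sum_product' _ _ _).symm
      _ = ∑ p ∈ Finset.univ.filter (fun p : Fin (n + 3) × Fin (n + 3) => p.1 ≠ p.2),
            Gaux n a X p.1 p.2 := by
          refine Finset.sum_nbij' (fun p => (p.1, p.1.succAbove p.2))
            (fun p => (p.1, dropAt p.1 p.2)) ?_ ?_ ?_ ?_ ?_
          · intro p _
            simp only [Finset.mem_filter, Finset.mem_univ, true_and]
            exact (Fin.succAbove_ne p.1 p.2).symm
          · intro p _
            simp
          · intro p _
            simp [dropAt_succAbove]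
          · intro p hp
            simp only [Finset.mem_filter, Finset.mem_univ, true_and] at hp
            simp [succAbove_dropAt p.1 p.2 hp]
          · intro p _
            exact term_eq_Gaux n a X p.1 p.2
      _ = (∑ p ∈ Finset.univ.filter (fun p : Fin (n + 3) × Fin (n + 3) => p.1 < p.2),
            Gaux n a X p.1 p.2)
          + ∑ p ∈ Finset.univ.filter (fun p : Fin (n + 3) × Fin (n + 3) => p.2 < p.1),
            Gaux n a X p.1 p.2 := by
          rw [hsplit, Finset.sum_union hdisj]
      _ = (∑ p ∈ Finset.univ.filter (fun p : Fin (n + 3) × Fin (n + 3) => p.1 < p.2),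
            Gaux n a X p.1 p.2)
          + ∑ p ∈ Finset.univ.filter (fun p : Fin (n + 3) × Fin (n + 3) => p.1 < p.2),
            Gaux n a X p.2 p.1 := by
          congr 1
          refine Finset.sum_nbij' Prod.swap Prod.swap ?_ ?_ ?_ ?_ ?_ <;>
            simp [Finset.mem_filter]
      _ = ∑ p ∈ Finset.univ.filter (fun p : Fin (n + 3) × Fin (n + 3) => p.1 < p.2),
            (Gaux n a X p.1 p.2 + Gaux n a X p.2 p.1) := (Finset.sum_add_distrib).symm
      _ = ∑ p ∈ Finset.univ.filter (fun p : Fin (n + 3) × Fin (n + 3) => p.1 < p.2),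
            ((-1 : K) ^ ((p.1 : ℕ) + (p.2 : ℕ))) •
              (wedgeOf K (n + 1) (fun l => a (omitTwo p.1 p.2 l))
                ⊗ₜ[K] (d (wedgeOf K 2 ![w p.1, w p.2]) * σ)) := by
          refine Finset.sum_congr rfl fun p hp => ?_
          simp only [Finset.mem_filter, Finset.mem_univ, true_and] at hp
          exact Gaux_pair n a X p.1 p.2 hp _ (key p.1 p.2)
  rw [hδmapβ, map_sum]
  refine (Finset.sum_congr rfl fun p _ => ?_).symm
  rw [LinearMap.map_smul, TensorProduct.map_tmul, LinearMap.mulRight_apply, LinearMap.id_apply]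
end
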